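/- arXiv:0909.1915 — 2 statements merged into one kernel-verified Lean document; each statement's English description precedes it below -/
import Mathlib

section
/- For all r > 0, a ≥ r, and 0 < y < 1/(2a), one has -(1/2)·log(1 - 2ry) - ry ≤ r²y²/(1 - 2ay). -/
open Real

/-- Substituting `z = x / (2 - x)`, so that `(1 + z) / (1 - z) = 1 / (1 - x)`, this is the
first-order bound `½ log ((1 + z) / (1 - z)) ≤ z / (1 - z²)` of the artanh series. -/
theorem Real.neg_log_one_sub_sub_le {x : ℝ} (hx₀ : 0 ≤ x) (hx₁ : x < 1) :
    -log (1 - x) - x ≤ x ^ 2 / (2 * (1 - x)) := by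
  have h2x : 2 - x ≠ 0 := by linarith
  have h1x : 1 - x ≠ 0 := by linarith
  have hz_add : 1 + x / (2 - x) = 2 / (2 - x) := by field_simp; ring
  have hz_sub : 1 - x / (2 - x) = 2 * (1 - x) / (2 - x) := by field_simp; ring
  have hz₀ : 0 ≤ x / (2 - x) := div_nonneg hx₀ (by linarith)
  have hz₁ : x / (2 - x) < 1 := (div_lt_one (by linarith)).2 (by linarith)
  have artanh : 1 / 2 * log ((1 + x / (2 - x)) / (1 - x / (2 - x))) ≤
      (x / (2 - x)) ^ 1 / (1 - (x / (2 - x)) ^ 2) := by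
    simpa using log_div_le_sum_range_add hz₀ hz₁ 0
  have hratio : (1 + x / (2 - x)) / (1 - x / (2 - x)) = (1 - x)⁻¹ := by
    rw [hz_add, hz_sub]; field_simp
  have hbound : (x / (2 - x)) ^ 1 / (1 - (x / (2 - x)) ^ 2) =
      (x ^ 2 / (2 * (1 - x)) + x) / 2 := by
    rw [show 1 - (x / (2 - x)) ^ 2 = (1 - x / (2 - x)) * (1 + x / (2 - x)) by ring,
      hz_add, hz_sub]
    field_simp; ring
  rw [hratio, log_inv, hbound] at artanh
  linarith

theorem stmt_0 (r a y : ℝ) (hr : 0 < r) (ha : r ≤ a) (hy0 : 0 < y)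
    (hy1 : y < 1 / (2 * a)) :
    -(1 / 2) * Real.log (1 - 2 * r * y) - r * y ≤ r ^ 2 * y ^ 2 / (1 - 2 * a * y) := by
  have hay : 2 * a * y < 1 := by
    rwa [lt_div_iff₀ (by linarith), mul_comm] at hy1
  have hry : 2 * r * y ≤ 2 * a * y := by gcongr
  have key := neg_log_one_sub_sub_le (by positivity : 0 ≤ 2 * r * y) (hry.trans_lt hay)
  have hrewrite : (2 * r * y) ^ 2 / (2 * (1 - 2 * r * y)) =
      2 * (r ^ 2 * y ^ 2 / (1 - 2 * r * y)) := by
    field_simp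
  have hmono : r ^ 2 * y ^ 2 / (1 - 2 * r * y) ≤ r ^ 2 * y ^ 2 / (1 - 2 * a * y) := by
    gcongr
  linarith
end

section
/- For all r ≤ 0, a > 0, and 0 < y < 1/(2a), one has -(1/2)·log(1 - 2ry) - ry ≤ r²y²/(1 - 2ay). -/
/-! With `t = -2ry ≥ 0` the left side is `(t - log (1 + t)) / 2 ≤ t ^ 2 / 4 = r ^ 2 y ^ 2`, by
`log (1 + t) ≥ t - t ^ 2 / 2`; dividing by `0 < 1 - 2ay ≤ 1` only enlarges the right side. -/

open Real

lemma sub_sq_div_two_le_log_one_add {x : ℝ} (hx : 0 ≤ x) : x - x ^ 2 / 2 ≤ log (1 + x) :=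
  calc x - x ^ 2 / 2 ≤ 2 * x / (x + 2) := by
        rw [le_div_iff₀ (by positivity)]
        nlinarith [pow_nonneg hx 3]
    _ ≤ log (1 + x) := le_log_one_add_of_nonneg hx

theorem stmt_1 (r a y : ℝ) (hr : r ≤ 0) (ha : 0 < a) (hy0 : 0 < y)
    (hy1 : y < 1 / (2 * a)) :
    -(1 / 2) * Real.log (1 - 2 * r * y) - r * y ≤ r ^ 2 * y ^ 2 / (1 - 2 * a * y) := by
  have hden : 0 < 1 - 2 * a * y := by
    rw [lt_div_iff₀ (by positivity)] at hy1
    linarith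
  have hlog := sub_sq_div_two_le_log_one_add (x := -2 * r * y) (by nlinarith)
  rw [show 1 + -2 * r * y = 1 - 2 * r * y by ring] at hlog
  calc -(1 / 2) * log (1 - 2 * r * y) - r * y ≤ r ^ 2 * y ^ 2 := by nlinarith
    _ ≤ r ^ 2 * y ^ 2 / (1 - 2 * a * y) :=
      le_div_self (by positivity) hden (by nlinarith [mul_pos ha hy0])
end
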